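/- arXiv:math/0410362 — 4 statements merged into one kernel-verified Lean document; each statement's English description precedes it below -/
import Mathlib

section
/- Let n ≥ 1, let a ∈ ℂⁿ, and let φ be a complex-valued function on ℂⁿ × ℂⁿ that is analytic at the point (a, conj(a)) (i.e. it agrees with a convergent power series on a neighborhood of that point). If φ(z, conj(z)) = 0 for all z in some neighborhood of a in ℂⁿ, then φ vanishes identically on some neighborhood of (a, conj(a)) in ℂⁿ × ℂⁿ. -/
/-!
Write `φ (x₀ + w) = ∑ₖ pₖ (w, …, w)` near `x₀ = (a, ā)` and let `d z = (z, z̄)`, an `ℝ`-linear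
map. Viewed over `ℝ`, the series `pₖ ∘ d` represents `z ↦ φ (z, z̄)` at `a`, which vanishes, so
each homogeneous term `pₖ` vanishes on the range of `d`. Every `w` is `d u + i • d v`, and the
entire function `t ↦ pₖ (d u + t • d v, …)` vanishes on `ℝ`, hence at `t = i`. So every term
of the series vanishes, and so does `φ` near `x₀`.
-/

open Filter Topology Complex ComplexConjugate

theorem AnalyticOnNhd.eq_zero_of_forall_ofReal {F : Type*} [NormedAddCommGroup F]
    [NormedSpace ℂ F] {g : ℂ → F} (hg : AnalyticOnNhd ℂ g Set.univ)
    (h : ∀ s : ℝ, g s = 0) (z : ℂ) : g z = 0 := by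
  have hfreq : ∃ᶠ t in 𝓝[≠] (0 : ℂ), g t = 0 :=
    (continuous_ofReal.continuousWithinAt.tendsto_nhdsWithin fun _ _ ↦ by simp_all
      : Tendsto ofReal (𝓝[≠] 0) (𝓝[≠] 0)).frequently (.of_forall h)
  exact hg.eqOn_zero_of_preconnected_of_frequently_eq_zero isPreconnected_univ
    (Set.mem_univ 0) hfreq (Set.mem_univ z)

section

variable {V E F : Type*} [NormedAddCommGroup V] [NormedSpace ℝ V]
  [NormedAddCommGroup E] [NormedSpace ℂ E] [NormedAddCommGroup F] [NormedSpace ℂ F]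

theorem AnalyticOnNhd.eq_zero_of_comp_eq_zero {g : E → F} (hg : AnalyticOnNhd ℂ g Set.univ)
    (d : V →L[ℝ] E) (hd : ∀ w, ∃ u v, d u + I • d v = w) (h : ∀ y, g (d y) = 0) (w : E) :
    g w = 0 := by
  obtain ⟨u, v, rfl⟩ := hd w
  have hline : AnalyticOnNhd ℂ (fun t : ℂ => g (d u + t • d v)) Set.univ := fun t _ =>
    (hg _ (Set.mem_univ _)).comp (by fun_prop)
  refine hline.eq_zero_of_forall_ofReal (fun s => ?_) I
  simpa [map_add, map_smul, Complex.coe_smul] using h (u + s • v)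

theorem AnalyticAt.eventually_eq_zero_of_comp_eventually_eq_zero {φ : E → F}
    (d : V →L[ℝ] E) (hd : ∀ w, ∃ u v, d u + I • d v = w) {a : V}
    (hφ : AnalyticAt ℂ φ (d a)) (h0 : φ ∘ d =ᶠ[𝓝 a] 0) : φ =ᶠ[𝓝 (d a)] 0 := by
  obtain ⟨p, hp⟩ := hφ
  have hcomp : HasFPowerSeriesAt 0 ((p.restrictScalars ℝ).compContinuousLinearMap d) a :=
    hp.restrictScalars.compContinuousLinearMap.congr h0
  have hterms : ∀ k w, p k (fun _ => w) = 0 := fun k =>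
    AnalyticOnNhd.eq_zero_of_comp_eq_zero (g := fun w => p k fun _ => w)
      (fun _ _ => (p k).analyticAt.comp (AnalyticAt.pi fun _ => analyticAt_id)) d hd
      (hcomp.apply_eq_zero k)
  filter_upwards [hp.eventually_hasSum_sub] with x hx
  exact hx.unique (by simp [hterms])

end

noncomputable def graphConj (ι : Type*) [Fintype ι] : (ι → ℂ) →L[ℝ] (ι → ℂ) × (ι → ℂ) :=
  (ContinuousLinearMap.id ℝ _).prod (starL' ℝ : (ι → ℂ) ≃L[ℝ] _).toContinuousLinearMap

theorem graphConj_apply {ι : Type*} [Fintype ι] (z : ι → ℂ) :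
    graphConj ι z = (z, fun i => conj (z i)) := rfl

theorem exists_graphConj_add_I_smul_eq {ι : Type*} [Fintype ι] (w : (ι → ℂ) × (ι → ℂ)) :
    ∃ u v, graphConj ι u + I • graphConj ι v = w := by
  refine ⟨(2⁻¹ : ℂ) • (w.1 + star w.2), (-I / 2) • (w.1 - star w.2), ?_⟩
  ext i <;> simp only [graphConj_apply, Prod.fst_add, Prod.snd_add, Prod.smul_fst, Prod.smul_snd,
    Pi.add_apply, Pi.sub_apply, Pi.smul_apply, Pi.star_apply, smul_eq_mul, map_add, map_sub,
    map_mul, map_div₀, map_neg, map_inv₀, map_ofNat, conj_I, conj_conj, star_def]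
  · linear_combination (conj (w.2 i) - w.1 i) / 2 * I_sq
  · linear_combination (conj (w.1 i) - w.2 i) / 2 * I_sq

theorem vanishing_on_diagonal_of_analyticAt_general
    (n : ℕ) (a : Fin n → ℂ)
    (φ : (Fin n → ℂ) × (Fin n → ℂ) → ℂ)
    (hφ : AnalyticAt ℂ φ (a, fun i => (starRingEnd ℂ) (a i)))
    (h0 : ∀ᶠ z in nhds a, φ (z, fun i => (starRingEnd ℂ) (z i)) = 0) :
    ∀ᶠ p in nhds ((a, fun i => (starRingEnd ℂ) (a i)) :
        (Fin n → ℂ) × (Fin n → ℂ)), φ p = 0 :=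
  hφ.eventually_eq_zero_of_comp_eventually_eq_zero (graphConj (Fin n))
    exists_graphConj_add_I_smul_eq h0

/-- If `φ : ℂⁿ × ℂⁿ → ℂ` is analytic at `(a, conj a)` and vanishes on the totally real
diagonal `{(z, conj z)}` for `z` near `a`, then `φ` vanishes identically on a neighborhood
of `(a, conj a)`. -/
theorem vanishing_on_diagonal_of_analyticAt
    (n : ℕ) (hn : 1 ≤ n) (a : Fin n → ℂ)
    (φ : (Fin n → ℂ) × (Fin n → ℂ) → ℂ)
    (hφ : AnalyticAt ℂ φ (a, fun i => (starRingEnd ℂ) (a i)))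
    (h0 : ∀ᶠ z in nhds a, φ (z, fun i => (starRingEnd ℂ) (z i)) = 0) :
    ∀ᶠ p in nhds ((a, fun i => (starRingEnd ℂ) (a i)) :
        (Fin n → ℂ) × (Fin n → ℂ)), φ p = 0 :=
  vanishing_on_diagonal_of_analyticAt_general n a φ hφ h0
end

section
/- Let n ≥ 1 and let U ⊆ ℂⁿ be a connected open set, and set Ū := {conj(z) : z ∈ U}. If φ : ℂⁿ × ℂⁿ → ℂ is holomorphic on the open set U × Ū (i.e. complex differentiable at every point of U × Ū) and φ(z, conj(z)) = 0 for every z ∈ U, then φ(z, w) = 0 for every (z, w) ∈ U × Ū. -/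
/-!
Near a diagonal point, write `x = a + I • b` with `a` and `b` fixed by the antiholomorphic
involution `(z, w) ↦ (w̄, z̄)`, whose fixed points are exactly the points `(z, z̄)`. For real `t`
the point `a + t • b` is then on the diagonal, so the one-variable holomorphic function
`t ↦ φ (a + t • b)` vanishes on a real interval, hence everywhere, in particular at `t = I`.
So `φ` vanishes near the diagonal, and the identity theorem along complex lines, together with
the connectedness of `U × Ū`, spreads this over `U × Ū`.
-/

open Metric Filter Function Topology Set Complex

section IdentityTheorem

variable {E F : Type*} [NormedAddCommGroup E] [NormedSpace ℂ E]
  [NormedAddCommGroup F] [NormedSpace ℂ F] [CompleteSpace F]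

theorem DifferentiableOn.apply_add_smul_eq_zero_of_eventually_real {g : E → F} {C : Set E}
    (hg : DifferentiableOn ℂ g C) (hCo : IsOpen C) (hCc : Convex ℝ C) {a b : E} (ha : a ∈ C)
    (h0 : ∀ᶠ t : ℝ in 𝓝 0, g (a + (t : ℂ) • b) = 0) {z : ℂ} (hz : a + z • b ∈ C) :
    g (a + z • b) = 0 := by
  have hline : Differentiable ℂ (fun w : ℂ => a + w • b) := by fun_prop
  set S := (fun w : ℂ => a + w • b) ⁻¹' C
  have hSc : Convex ℝ S :=
    (hCc.translate_preimage_right a).is_linear_preimage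
      ((LinearMap.toSpanSingleton ℂ E b).restrictScalars ℝ).isLinear
  have hf : AnalyticOnNhd ℂ (fun w => g (a + w • b)) S :=
    (hg.comp hline.differentiableOn fun _ hw => hw).analyticOnNhd (hCo.preimage hline.continuous)
  have hreal : Tendsto (fun t : ℝ => (t : ℂ)) (𝓝[≠] 0) (𝓝[≠] 0) := by
    simpa using continuous_ofReal.continuousWithinAt.tendsto_nhdsWithin (x := 0)
      fun _ _ ↦ by simp_all
  exact hf.eqOn_zero_of_preconnected_of_frequently_eq_zero hSc.isPreconnected
    (by simpa [S] using ha) (hreal.frequently (h0.filter_mono nhdsWithin_le_nhds).frequently) hz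

theorem DifferentiableOn.eqOn_zero_of_convex_of_eventuallyEq_zero {g : E → F} {C : Set E}
    (hg : DifferentiableOn ℂ g C) (hCo : IsOpen C) (hCc : Convex ℝ C) {q : E} (hq : q ∈ C)
    (h0 : g =ᶠ[𝓝 q] 0) : EqOn g 0 C := by
  intro p hp
  have hline : Tendsto (fun t : ℝ => q + (t : ℂ) • (p - q)) (𝓝 0) (𝓝 q) :=
    Continuous.tendsto' (by fun_prop) _ _ (by simp)
  simpa using hg.apply_add_smul_eq_zero_of_eventually_real hCo hCc hq (hline.eventually h0)
    (z := 1) (by simpa using hp)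

theorem DifferentiableOn.eqOn_zero_of_preconnected_of_eventuallyEq_zero {g : E → F} {U : Set E}
    (hg : DifferentiableOn ℂ g U) (hUo : IsOpen U) (hUc : IsPreconnected U) {q : E} (hq : q ∈ U)
    (h0 : g =ᶠ[𝓝 q] 0) : EqOn g 0 U := by
  have hsub : U ⊆ {p | g =ᶠ[𝓝 p] 0} := by
    refine hUc.subset_of_closure_inter_subset isOpen_setOfPred_eventually_nhds ⟨q, hq, h0⟩ ?_
    rintro p ⟨hpcl, hpU⟩
    obtain ⟨ρ, hρ, hball⟩ := Metric.isOpen_iff.1 hUo p hpU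
    obtain ⟨q', hq'ball, hq'⟩ := mem_closure_iff_nhds.1 hpcl _ (ball_mem_nhds p hρ)
    exact mem_of_superset (ball_mem_nhds p hρ)
      ((hg.mono hball).eqOn_zero_of_convex_of_eventuallyEq_zero isOpen_ball (convex_ball p ρ)
        hq'ball hq')
  exact fun p hp => (hsub hp).self_of_nhds

theorem DifferentiableOn.eventuallyEq_zero_of_eventually_fixed {g : E → F} {s : Set E} {p : E}
    (σ : E →L⋆[ℂ] E) (hσ : Involutive σ) (hs : s ∈ 𝓝 p) (hg : DifferentiableOn ℂ g s)
    (hp : σ p = p) (h0 : ∀ᶠ x in 𝓝 p, σ x = x → g x = 0) : g =ᶠ[𝓝 p] 0 := by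
  obtain ⟨ρ, hρ, hball⟩ := Metric.mem_nhds_iff.1 (inter_mem hs h0)
  set a : E → E := fun x => (2⁻¹ : ℂ) • (x + σ x)
  set b : E → E := fun x => (I / 2) • (σ x - x)
  have ha_fixed : ∀ x, σ (a x) = a x := fun x => by simp [a, hσ x, add_comm, map_ofNat]
  have hb_fixed : ∀ x, σ (b x) = b x := fun x => by
    simp only [b, map_smulₛₗ, map_sub, hσ x, map_div₀, conj_I, map_ofNat]
    module
  have hab : ∀ x, a x + I • b x = x := fun x => by
    simp only [a, b, smul_smul]
    rw [show I * (I / 2) = -2⁻¹ by field_simp; simp]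
    module
  have ha : Tendsto a (𝓝 p) (𝓝 p) :=
    Continuous.tendsto' (by fun_prop) _ _ (by simp only [a, hp]; module)
  filter_upwards [ha.eventually (ball_mem_nhds p hρ), ball_mem_nhds p hρ] with x hax hx
  rw [← hab x]
  refine (hg.mono (hball.trans inter_subset_left)).apply_add_smul_eq_zero_of_eventually_real
    isOpen_ball (convex_ball p ρ) hax ?_ (by rwa [hab])
  have hline : Tendsto (fun t : ℝ => a x + (t : ℂ) • b x) (𝓝 0) (𝓝 (a x)) :=
    Continuous.tendsto' (by fun_prop) _ _ (by simp)
  filter_upwards [hline.eventually (isOpen_ball.mem_nhds hax)] with t ht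
  exact (hball ht).2 (by simp only [map_add, map_smulₛₗ, conj_ofReal, ha_fixed, hb_fixed])

end IdentityTheorem

section SwapConj

variable (V : Type*) [NormedAddCommGroup V] [NormedSpace ℂ V] [StarAddMonoid V]
  [StarModule ℂ V] [ContinuousStar V]

def swapConj : V × V →L⋆[ℂ] V × V :=
  (starL ℂ).toContinuousLinearMap.comp (ContinuousLinearEquiv.prodComm ℂ V V).toContinuousLinearMap

variable {V}

@[simp]
theorem swapConj_apply (x : V × V) : swapConj V x = (star x.2, star x.1) := rfl

theorem swapConj_involutive : Involutive (swapConj V) := fun x => by simp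

end SwapConj

theorem eq_zero_of_vanishing_on_diagonal_general
    (n : ℕ) (U : Set (Fin n → ℂ))
    (hUopen : IsOpen U) (hUconn : IsConnected U)
    (φ : (Fin n → ℂ) × (Fin n → ℂ) → ℂ)
    (hφ : DifferentiableOn ℂ φ
      (U ×ˢ ((fun z : Fin n → ℂ => fun i => (starRingEnd ℂ) (z i)) '' U)))
    (h0 : ∀ z ∈ U, φ (z, fun i => (starRingEnd ℂ) (z i)) = 0) :
    ∀ p ∈ U ×ˢ ((fun z : Fin n → ℂ => fun i => (starRingEnd ℂ) (z i)) '' U), φ p = 0 := by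
  change DifferentiableOn ℂ φ (U ×ˢ (star '' U)) at hφ
  change ∀ z ∈ U, φ (z, star z) = 0 at h0
  change ∀ p ∈ U ×ˢ (star '' U), φ p = 0
  have hSo : IsOpen (U ×ˢ (star '' U)) :=
    hUopen.prod (by rw [image_star]; exact hUopen.preimage continuous_star)
  have hSc : IsPreconnected (U ×ˢ (star '' U)) :=
    hUconn.isPreconnected.prod (hUconn.isPreconnected.image _ continuous_star.continuousOn)
  obtain ⟨z₀, hz₀⟩ := hUconn.nonempty
  have hp₀ : (z₀, star z₀) ∈ U ×ˢ (star '' U) := ⟨hz₀, z₀, hz₀, rfl⟩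
  have hzero : ∀ x ∈ U ×ˢ (star '' U), swapConj _ x = x → φ x = 0 := by
    rintro ⟨z, w⟩ ⟨hz, -⟩ hfix
    obtain rfl : star z = w := congrArg Prod.snd hfix
    exact h0 z hz
  have hloc : φ =ᶠ[𝓝 (z₀, star z₀)] 0 :=
    hφ.eventuallyEq_zero_of_eventually_fixed (swapConj _) swapConj_involutive
      (hSo.mem_nhds hp₀) (by simp) (eventually_of_mem (hSo.mem_nhds hp₀) hzero)
  exact hφ.eqOn_zero_of_preconnected_of_eventuallyEq_zero hSo hSc hp₀ hloc

/-- Identity theorem: a function holomorphic on `U × Ū` (with `U ⊆ ℂⁿ` connected open and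
`Ū` its conjugate domain) that vanishes on the totally real diagonal `{(z, conj z) : z ∈ U}`
vanishes identically on `U × Ū`. -/
theorem eq_zero_of_vanishing_on_diagonal
    (n : ℕ) (hn : 1 ≤ n) (U : Set (Fin n → ℂ))
    (hUopen : IsOpen U) (hUconn : IsConnected U)
    (φ : (Fin n → ℂ) × (Fin n → ℂ) → ℂ)
    (hφ : DifferentiableOn ℂ φ
      (U ×ˢ ((fun z : Fin n → ℂ => fun i => (starRingEnd ℂ) (z i)) '' U)))
    (h0 : ∀ z ∈ U, φ (z, fun i => (starRingEnd ℂ) (z i)) = 0) :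
    ∀ p ∈ U ×ˢ ((fun z : Fin n → ℂ => fun i => (starRingEnd ℂ) (z i)) '' U), φ p = 0 :=
  eq_zero_of_vanishing_on_diagonal_general n U hUopen hUconn φ hφ h0
end

section
/- Let n ≥ 1 and let U ⊆ ℂⁿ be a connected open set, and set Ū := {conj(z) : z ∈ U}. If φ₁ and φ₂ are functions ℂⁿ × ℂⁿ → ℂ that are both holomorphic on the open set U × Ū and satisfy φ₁(z, conj(z)) = φ₂(z, conj(z)) for every z ∈ U, then φ₁ = φ₂ on all of U × Ū. In particular, a function on the totally real diagonal {(z, conj(z)) : z ∈ U} has at most one holomorphic extension to U × Ū. -/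
/-!
A holomorphic function of several variables that vanishes near one point of a connected open
set vanishes on all of it: on a convex set this is the one-variable identity theorem applied
along complex lines, and an open-closed argument does the rest. So it suffices that
`φ₁ - φ₂` vanishes near a diagonal point `(a, ā)`. Every point near it is `d + i • e` with
`d`, `e` on the diagonal `{(z, z̄)}`, and the complex line `t ↦ d + t • e` meets the diagonal
at every real `t`; a holomorphic function of one variable vanishing on a real interval
vanishes identically, in particular at `t = i`.
-/

open Filter Topology Metric

section
variable {E F : Type*} [NormedAddCommGroup E] [NormedSpace ℂ E]
  [NormedAddCommGroup F] [NormedSpace ℂ F] [CompleteSpace F]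

theorem apply_add_smul_eq_zero_of_eventually_real {f : E → F} {s : Set E}
    (hf : DifferentiableOn ℂ f s) (hs : IsOpen s) (hconv : Convex ℝ s) {x y : E} (hx : x ∈ s)
    (h : ∀ᶠ t : ℝ in 𝓝 0, f (x + (t : ℂ) • y) = 0) {w : ℂ} (hw : x + w • y ∈ s) :
    f (x + w • y) = 0 := by
  set T := (fun t : ℂ => x + t • y) ⁻¹' s
  have hline : Differentiable ℂ fun t : ℂ => x + t • y := by fun_prop
  have hT : IsOpen T := hs.preimage hline.continuous
  have hTconv : Convex ℝ T := by
    intro t₁ h₁ t₂ h₂ a b ha hb hab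
    have hcomb : x + (a • t₁ + b • t₂) • y = a • (x + t₁ • y) + b • (x + t₂ • y) := by
      rw [add_smul, smul_add, smul_add, smul_assoc, smul_assoc, add_add_add_comm, ← add_smul,
        hab, one_smul]
    show x + (a • t₁ + b • t₂) • y ∈ s
    rw [hcomb]
    exact hconv h₁ h₂ ha hb hab
  have hg : AnalyticOnNhd ℂ (fun t : ℂ => f (x + t • y)) T :=
    (hf.comp hline.differentiableOn fun _ ht => ht).analyticOnNhd hT
  have hfreq : ∃ᶠ t in 𝓝[≠] (0 : ℂ), f (x + t • y) = 0 := by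
    have hreal : Tendsto ((↑) : ℝ → ℂ) (𝓝[≠] 0) (𝓝[≠] 0) :=
      tendsto_nhdsWithin_of_tendsto_nhds_of_eventually_within _
        (Complex.continuous_ofReal.tendsto' 0 0 Complex.ofReal_zero |>.mono_left
          nhdsWithin_le_nhds)
        (eventually_nhdsWithin_of_forall fun t ht => by simpa using ht)
    exact hreal.frequently (h.filter_mono nhdsWithin_le_nhds).frequently
  exact hg.eqOn_zero_of_preconnected_of_frequently_eq_zero hTconv.isPreconnected
    (by simpa [T] using hx) hfreq hw

theorem Convex.eqOn_zero_of_eventuallyEq_zero {f : E → F} {s : Set E}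
    (hf : DifferentiableOn ℂ f s) (hs : IsOpen s) (hconv : Convex ℝ s) {x : E} (hx : x ∈ s)
    (h : f =ᶠ[𝓝 x] 0) : Set.EqOn f 0 s := by
  intro y hy
  have hseg : Tendsto (fun t : ℝ => x + (t : ℂ) • (y - x)) (𝓝 0) (𝓝 x) := by
    simpa using ((by fun_prop : Continuous fun t : ℝ => x + (t : ℂ) • (y - x)).tendsto 0)
  simpa using apply_add_smul_eq_zero_of_eventually_real hf hs hconv hx (hseg.eventually h)
    (w := 1) (by simpa using hy)

theorem IsPreconnected.eqOn_zero_of_eventuallyEq_zero {f : E → F} {s : Set E}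
    (hf : DifferentiableOn ℂ f s) (hs : IsOpen s) (hconn : IsPreconnected s) {x : E} (hx : x ∈ s)
    (h : f =ᶠ[𝓝 x] 0) : Set.EqOn f 0 s := by
  set Z := {p | f =ᶠ[𝓝 p] 0}
  suffices s ⊆ Z from fun y hy => (this hy).self_of_nhds
  refine hconn.subset_of_closure_inter_subset isOpen_setOfPred_eventually_nhds ⟨x, hx, h⟩ ?_
  rintro p ⟨hpZ, hps⟩
  obtain ⟨r, hr, hball⟩ := Metric.isOpen_iff.1 hs p hps
  obtain ⟨q, hq, hqZ⟩ := mem_closure_iff_nhds.1 hpZ _ (ball_mem_nhds p hr)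
  exact eventually_of_mem (ball_mem_nhds p hr) <|
    (convex_ball p r).eqOn_zero_of_eventuallyEq_zero (hf.mono hball) isOpen_ball hq hqZ
end

section
variable {E F : Type*} [NormedAddCommGroup E] [NormedSpace ℂ E] [StarAddMonoid E]
  [StarModule ℂ E] [ContinuousStar E] [NormedAddCommGroup F] [NormedSpace ℂ F] [CompleteSpace F]

theorem eventuallyEq_zero_of_eq_zero_on_diagonal {f : E × E → F} {s : Set (E × E)}
    (hf : DifferentiableOn ℂ f s) (hs : IsOpen s)
    (h : ∀ z, (z, star z) ∈ s → f (z, star z) = 0) {a : E} (ha : (a, star a) ∈ s) :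
    f =ᶠ[𝓝 (a, star a)] 0 := by
  obtain ⟨r, hr, hball⟩ := Metric.isOpen_iff.1 hs _ ha
  set re : E × E → E := fun p => (2 : ℂ)⁻¹ • (p.1 + star p.2)
  set im : E × E → E := fun p => (Complex.I / 2) • (star p.2 - p.1)
  have hdecomp : ∀ p, (re p, star (re p)) + Complex.I • (im p, star (im p)) = p := by
    intro p
    ext
    · simp only [re, im, Prod.fst_add, Prod.smul_fst]
      match_scalars <;> ring_nf <;> norm_num [Complex.I_sq]
    · simp only [re, im, Prod.snd_add, Prod.smul_snd, star_smul, star_add, star_sub, star_star,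
        star_inv₀, star_ofNat, smul_add, star_div₀, RCLike.star_def, Complex.conj_I]
      match_scalars <;> ring_nf <;> norm_num [Complex.I_sq]
  have hre : Tendsto (fun p => (re p, star (re p))) (𝓝 (a, star a)) (𝓝 (a, star a)) := by
    have hre_diag : re (a, star a) = a := by
      simp only [re, star_star, ← two_smul ℂ a, smul_smul]
      norm_num
    simpa [hre_diag] using
      ((by fun_prop : Continuous fun p => (re p, star (re p))).tendsto (a, star a))
  filter_upwards [hre.eventually (ball_mem_nhds _ hr), ball_mem_nhds _ hr] with p hxp hp
  rw [← hdecomp p]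
  refine apply_add_smul_eq_zero_of_eventually_real (hf.mono hball) isOpen_ball (convex_ball _ _)
    hxp ?_ (by rwa [hdecomp])
  have hline : Tendsto (fun t : ℝ => (re p, star (re p)) + (t : ℂ) • (im p, star (im p))) (𝓝 0)
      (𝓝 (re p, star (re p))) := by
    simpa using ((by fun_prop : Continuous fun t : ℝ =>
      (re p, star (re p)) + (t : ℂ) • (im p, star (im p))).tendsto 0)
  filter_upwards [hline.eventually (hs.mem_nhds (hball hxp))] with t ht
  have hdiag : (re p, star (re p)) + (t : ℂ) • (im p, star (im p)) =
      (re p + (t : ℂ) • im p, star (re p + (t : ℂ) • im p)) := by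
    simp [star_smul]
  rw [hdiag] at ht ⊢
  exact h _ ht

theorem IsPreconnected.eqOn_of_eq_on_diagonal {f g : E × E → F} {s : Set (E × E)}
    (hf : DifferentiableOn ℂ f s) (hg : DifferentiableOn ℂ g s) (hs : IsOpen s)
    (hconn : IsPreconnected s) (h : ∀ z, (z, star z) ∈ s → f (z, star z) = g (z, star z))
    {a : E} (ha : (a, star a) ∈ s) : Set.EqOn f g s := by
  have hsub : DifferentiableOn ℂ (f - g) s := hf.sub hg
  have hdiag : f - g =ᶠ[𝓝 (a, star a)] 0 :=
    eventuallyEq_zero_of_eq_zero_on_diagonal hsub hs (fun z hz => sub_eq_zero.2 (h z hz)) ha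
  exact fun p hp => sub_eq_zero.1 (hconn.eqOn_zero_of_eventuallyEq_zero hsub hs ha hdiag hp)
end

theorem eq_of_eq_on_diagonal_general
    (n : ℕ) (U : Set (Fin n → ℂ))
    (hUopen : IsOpen U) (hUconn : IsConnected U)
    (φ₁ φ₂ : (Fin n → ℂ) × (Fin n → ℂ) → ℂ)
    (hφ₁ : DifferentiableOn ℂ φ₁
      (U ×ˢ ((fun z : Fin n → ℂ => fun i => (starRingEnd ℂ) (z i)) '' U)))
    (hφ₂ : DifferentiableOn ℂ φ₂
      (U ×ˢ ((fun z : Fin n → ℂ => fun i => (starRingEnd ℂ) (z i)) '' U)))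
    (h0 : ∀ z ∈ U, φ₁ (z, fun i => (starRingEnd ℂ) (z i)) =
      φ₂ (z, fun i => (starRingEnd ℂ) (z i))) :
    ∀ p ∈ U ×ˢ ((fun z : Fin n → ℂ => fun i => (starRingEnd ℂ) (z i)) '' U),
      φ₁ p = φ₂ p := by
  change DifferentiableOn ℂ φ₁ (U ×ˢ (star '' U)) at hφ₁
  change DifferentiableOn ℂ φ₂ (U ×ˢ (star '' U)) at hφ₂
  change ∀ z ∈ U, φ₁ (z, star z) = φ₂ (z, star z) at h0
  change Set.EqOn φ₁ φ₂ (U ×ˢ (star '' U))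
  have hopen : IsOpen (U ×ˢ (star '' U)) := by
    rw [Set.image_star]
    exact hUopen.prod (hUopen.preimage continuous_star)
  have hconn : IsPreconnected (U ×ˢ (star '' U)) :=
    hUconn.isPreconnected.prod (hUconn.isPreconnected.image _ continuous_star.continuousOn)
  obtain ⟨a, ha⟩ := hUconn.nonempty
  exact hconn.eqOn_of_eq_on_diagonal hφ₁ hφ₂ hopen (fun z hz => h0 z hz.1) ⟨ha, a, ha, rfl⟩

/-- Uniqueness of holomorphic extensions from the totally real diagonal: two functions
holomorphic on `U × Ū` (with `U ⊆ ℂⁿ` connected open and `Ū` its conjugate domain) that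
agree on the diagonal `{(z, conj z) : z ∈ U}` agree on all of `U × Ū`. -/
theorem eq_of_eq_on_diagonal
    (n : ℕ) (hn : 1 ≤ n) (U : Set (Fin n → ℂ))
    (hUopen : IsOpen U) (hUconn : IsConnected U)
    (φ₁ φ₂ : (Fin n → ℂ) × (Fin n → ℂ) → ℂ)
    (hφ₁ : DifferentiableOn ℂ φ₁
      (U ×ˢ ((fun z : Fin n → ℂ => fun i => (starRingEnd ℂ) (z i)) '' U)))
    (hφ₂ : DifferentiableOn ℂ φ₂
      (U ×ˢ ((fun z : Fin n → ℂ => fun i => (starRingEnd ℂ) (z i)) '' U)))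
    (h0 : ∀ z ∈ U, φ₁ (z, fun i => (starRingEnd ℂ) (z i)) =
      φ₂ (z, fun i => (starRingEnd ℂ) (z i))) :
    ∀ p ∈ U ×ˢ ((fun z : Fin n → ℂ => fun i => (starRingEnd ℂ) (z i)) '' U),
      φ₁ p = φ₂ p :=
  eq_of_eq_on_diagonal_general n U hUopen hUconn φ₁ φ₂ hφ₁ hφ₂ h0
end

section
/- Let n ≥ 1 and let M be an n × n complex matrix that is symmetric (Mᵀ = M) and whose imaginary part is positive definite, i.e. the real symmetric matrix Im M, with entries (Im M)_{ij} = Im(M_{ij}), is positive definite as a real quadratic form. Then M is invertible (equivalently, det M ≠ 0). -/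
/-!
Writing `M = A + i B` with `A`, `B` real, symmetry of `M` gives `-i M + (-i M)ᴴ = 2 B`. So the
Hermitian part of `-i M` is positive definite once `B` is, and a matrix with positive definite
Hermitian part is injective: `M v = 0` forces `star v ⬝ (M + Mᴴ) v = 0`.
-/

open Matrix Complex
open scoped MatrixOrder ComplexOrder

section

variable {𝕜 n : Type*} [RCLike 𝕜] [Fintype n] [DecidableEq n]

theorem Matrix.isUnit_of_posDef_add_conjTranspose {M : Matrix n n 𝕜} (h : (M + Mᴴ).PosDef) :
    IsUnit M := by
  refine mulVec_injective_iff_isUnit.1 <| (injective_iff_map_eq_zero M.mulVecLin).2 fun v hv => ?_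
  by_contra hne
  have hpos := h.dotProduct_mulVec_pos hne
  rw [mulVecLin_apply] at hv
  rw [add_mulVec, dotProduct_add, dotProduct_mulVec (star v) Mᴴ, ← star_mulVec, hv] at hpos
  simp at hpos

theorem Matrix.PosDef.map_algebraMap {B : Matrix n n ℝ} (hB : B.PosDef) :
    (B.map (algebraMap ℝ 𝕜)).PosDef := by
  have hpsd : (B.map (algebraMap ℝ 𝕜)).PosSemidef := by
    obtain ⟨C, rfl⟩ := CStarAlgebra.nonneg_iff_eq_star_mul_self.mp hB.posSemidef.nonneg
    rw [star_eq_conjTranspose, Matrix.map_mul, conjTranspose_map _ (fun x => by simp)]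
    exact posSemidef_conjTranspose_mul_self _
  refine hpsd.posDef_iff_isUnit.2 ?_
  rw [isUnit_iff_isUnit_det, ← RingHom.mapMatrix_apply, ← RingHom.map_det]
  exact ((isUnit_iff_isUnit_det B).1 hB.isUnit).map _

end

theorem Matrix.IsSymm.neg_I_smul_add_conjTranspose {n : Type*} {M : Matrix n n ℂ}
    (hM : M.IsSymm) : -I • M + (-I • M)ᴴ = (2 : ℝ) • (M.map im).map (algebraMap ℝ ℂ) := by
  ext i j
  apply Complex.ext <;> simp [hM.apply i j, two_mul]

theorem isUnit_of_symm_posDef_im_general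
    (n : ℕ) (M : Matrix (Fin n) (Fin n) ℂ)
    (hsymm : M.transpose = M)
    (hpos : (Matrix.PosDef (fun i j => (M i j).im : Matrix (Fin n) (Fin n) ℝ))) :
    IsUnit M ∧ M.det ≠ 0 := by
  have hN : (-I • M + (-I • M)ᴴ).PosDef := by
    rw [IsSymm.neg_I_smul_add_conjTranspose hsymm]
    exact hpos.map_algebraMap.smul two_pos
  have hM : IsUnit M := (isUnit_smul_iff (Units.mk0 (-I) (by simp)) M).1 <| by
    simpa [Units.smul_def] using isUnit_of_posDef_add_conjTranspose hN
  exact ⟨hM, ((isUnit_iff_isUnit_det M).1 hM).ne_zero⟩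

/-- A symmetric complex matrix whose imaginary part is positive definite
(i.e. a point of the Siegel upper half space) is invertible, equivalently its
determinant is nonzero. -/
theorem isUnit_of_symm_posDef_im
    (n : ℕ) (hn : 1 ≤ n) (M : Matrix (Fin n) (Fin n) ℂ)
    (hsymm : M.transpose = M)
    (hpos : (Matrix.PosDef (fun i j => (M i j).im : Matrix (Fin n) (Fin n) ℝ))) :
    IsUnit M ∧ M.det ≠ 0 :=
  isUnit_of_symm_posDef_im_general n M hsymm hpos
end
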